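/- The ring R = ℂ[A,B,C,D,T]/I_T is an integral domain. -/

import Mathlib

/-!
The point `(a, b, (a² + t⁵)a²/b, b³/(a² + b), t)` with coordinates in `Frac ℂ[a, b, t]` is a zero of
the three minors, so evaluation at it is a map `φ` from `ℂ[A,B,C,D,T]` to a field with
`I_T ≤ ker φ`. Read as rewriting rules `BC → (A² + T⁵)A²`, `CD → (A² + T⁵)(B² − D)`,
`BD → B³ − A²D`, the minors reduce every polynomial modulo `I_T` to a normal form
`p₀(A,B,T) + C r(C) + D s(D)` with the coefficients of `r` and `s` in `ℂ[A, T]`. A normal form in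
`ker φ` is zero: `φ C` has a pole along `b = 0` and `φ D` one along `a² + b = 0`, so after clearing
denominators the specializations `b ↦ 0` and `b ↦ -a²` isolate the leading coefficients of `r`
and `s`. Hence `I_T = ker φ` is prime.
-/

open MvPolynomial

/-- Variables: `A = X 0`, `B = X 1`, `C = X 2`, `D = X 3`, `T = X 4`. -/
noncomputable def m₁ : MvPolynomial (Fin 5) ℂ :=
  ((X 0) ^ 2 + (X 4) ^ 5) * (X 0) ^ 2 - X 1 * X 2

noncomputable def m₂ : MvPolynomial (Fin 5) ℂ :=
  ((X 0) ^ 2 + (X 4) ^ 5) * ((X 1) ^ 2 - X 3) - X 2 * X 3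

noncomputable def m₃ : MvPolynomial (Fin 5) ℂ :=
  X 1 * ((X 1) ^ 2 - X 3) - (X 0) ^ 2 * X 3

/-- The ideal generated by the three 2×2 minors of
`[[A² + T⁵, B, D], [C, A², B² − D]]`. -/
noncomputable def I_T : Ideal (MvPolynomial (Fin 5) ℂ) :=
  Ideal.span {m₁, m₂, m₃}

namespace Polynomial

variable {S S' K : Type*} [CommRing S] [CommRing S'] [Field K]

theorem pow_natDegree_mul_eval₂_div (g : S →+* K) {q : S} (hq : g q ≠ 0) (u : S) (P : S[X]) :
    g q ^ P.natDegree * P.eval₂ g (g u / g q) = g ((P.scaleRoots q).eval u) := by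
  rw [← scaleRoots_eval₂_mul, mul_div_cancel₀ _ hq, eval₂_at_apply]

theorem map_eval_scaleRoots_of_map_eq_zero (π : S →+* S') {q : S} (hq : π q = 0) (u : S)
    (P : S[X]) : π ((P.scaleRoots q).eval u) = π P.leadingCoeff * π u ^ P.natDegree := by
  rw [eval_eq_sum_range, natDegree_scaleRoots, map_sum,
    Finset.sum_eq_single_of_mem _ (Finset.self_mem_range_succ _)]
  · simp [coeff_scaleRoots, map_mul, map_pow]
  · intro i hi hne
    have : P.natDegree - i ≠ 0 := by grind
    simp [coeff_scaleRoots, hq, zero_pow this]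

/-- `u / q` has a pole along `π = 0` and `u' / q'` has none, so the top coefficient of `P` must
vanish modulo `π`. -/
theorem map_leadingCoeff_eq_zero_of_add_eval₂_div_add_eval₂_div [IsDomain S'] {g : S →+* K}
    (hg : Function.Injective g) {π : S →+* S'} {p q u q' u' : S} {P Q : S[X]}
    (hq : π q = 0) (hgq : g q ≠ 0) (hu : π u ≠ 0) (hq' : π q' ≠ 0) (hgq' : g q' ≠ 0)
    (hP : 0 < P.natDegree)
    (h : g p + P.eval₂ g (g u / g q) + Q.eval₂ g (g u' / g q') = 0) :
    π P.leadingCoeff = 0 := by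
  have hcleared : p * q ^ P.natDegree * q' ^ Q.natDegree
      + q' ^ Q.natDegree * (P.scaleRoots q).eval u
      + q ^ P.natDegree * (Q.scaleRoots q').eval u' = 0 := by
    apply hg
    simp only [map_add, map_mul, map_pow, map_zero, ← pow_natDegree_mul_eval₂_div g hgq,
      ← pow_natDegree_mul_eval₂_div g hgq']
    linear_combination g q ^ P.natDegree * g q' ^ Q.natDegree * h
  have := congrArg π hcleared
  simp only [map_add, map_mul, map_pow, map_zero, hq, zero_pow hP.ne', mul_zero, zero_mul,
    add_zero, zero_add, map_eval_scaleRoots_of_map_eq_zero π hq] at this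
  simpa [hq', hu] using this

end Polynomial

namespace MinorsQuotient

noncomputable section

-- Coordinates: `P₃ = ℂ[a, b, t]` and `P₂ = ℂ[a, t]`.
abbrev P₂ := MvPolynomial (Fin 2) ℂ
abbrev P₃ := MvPolynomial (Fin 3) ℂ
abbrev P₅ := MvPolynomial (Fin 5) ℂ

def ofABT : P₃ →ₐ[ℂ] P₅ := rename ![0, 1, 4]
def atToABT : P₂ →ₐ[ℂ] P₃ := rename ![0, 2]
def ofAT : P₂ →ₐ[ℂ] P₅ := ofABT.comp atToABT

theorem ofABT_atToABT (u : P₂) : ofABT (atToABT u) = ofAT u := rfl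

def normalForm (p₀ : P₃) (r s : Polynomial P₂) : P₅ :=
  ofABT p₀ + (Polynomial.X * r).eval₂ ofAT (X 2) + (Polynomial.X * s).eval₂ ofAT (X 3)

def HasNormalForm (p : P₅) : Prop :=
  ∃ p₀ r s, p - normalForm p₀ r s ∈ I_T

theorem normalForm_add (p₀ q₀ : P₃) (r r' s s' : Polynomial P₂) :
    normalForm (p₀ + q₀) (r + r') (s + s') = normalForm p₀ r s + normalForm q₀ r' s' := by
  simp only [normalForm, map_add, mul_add, Polynomial.eval₂_add]
  ring

theorem ofAT_mul_normalForm (u : P₂) (p₀ : P₃) (r s : Polynomial P₂) :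
    ofAT u * normalForm p₀ r s
      = normalForm (atToABT u * p₀) (Polynomial.C u * r) (Polynomial.C u * s) := by
  simp only [normalForm, map_mul, Polynomial.eval₂_mul, Polynomial.eval₂_C, Polynomial.eval₂_X,
    RingHom.coe_coe, ofABT_atToABT]
  ring

theorem HasNormalForm.add {p q : P₅} (hp : HasNormalForm p) (hq : HasNormalForm q) :
    HasNormalForm (p + q) := by
  obtain ⟨p₀, r, s, hp⟩ := hp
  obtain ⟨q₀, r', s', hq⟩ := hq
  refine ⟨p₀ + q₀, r + r', s + s', ?_⟩
  rw [normalForm_add]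
  convert I_T.add_mem hp hq using 1
  ring

theorem HasNormalForm.ofAT_mul {p : P₅} (u : P₂) (hp : HasNormalForm p) :
    HasNormalForm (ofAT u * p) := by
  obtain ⟨p₀, r, s, hp⟩ := hp
  refine ⟨atToABT u * p₀, Polynomial.C u * r, Polynomial.C u * s, ?_⟩
  rw [← ofAT_mul_normalForm, ← mul_sub]
  exact I_T.mul_mem_left _ hp

theorem HasNormalForm.sub {p q : P₅} (hp : HasNormalForm p) (hq : HasNormalForm q) :
    HasNormalForm (p - q) := by
  simpa [sub_eq_add_neg, ofAT] using hp.add (hq.ofAT_mul (-1))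

theorem HasNormalForm.of_sub_mem {p q : P₅} (hq : HasNormalForm q) (h : p - q ∈ I_T) :
    HasNormalForm p := by
  obtain ⟨q₀, r, s, hq⟩ := hq
  exact ⟨q₀, r, s, by simpa using I_T.add_mem h hq⟩

theorem m₁_mem : m₁ ∈ I_T := Ideal.subset_span (by simp)
theorem m₂_mem : m₂ ∈ I_T := Ideal.subset_span (by simp)
theorem m₃_mem : m₃ ∈ I_T := Ideal.subset_span (by simp)

@[simp] theorem ofAT_X_zero : ofAT (X 0) = X 0 := by simp [ofAT, ofABT, atToABT]
@[simp] theorem ofAT_X_one : ofAT (X 1) = X 4 := by simp [ofAT, ofABT, atToABT]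

theorem hasNormalForm_X_pow_mul : ∀ k i j : ℕ, HasNormalForm (X 1 ^ k * X 2 ^ i * X 3 ^ j)
  | k, 0, 0 => ⟨X 1 ^ k, 0, 0, by simp [normalForm, ofABT]⟩
  | 0, i + 1, 0 => ⟨0, Polynomial.X ^ i, 0, by simp [normalForm, pow_succ']⟩
  | 0, 0, j + 1 => ⟨0, 0, Polynomial.X ^ j, by simp [normalForm, pow_succ']⟩
  | k + 1, i + 1, j => by
    refine ((hasNormalForm_X_pow_mul k i j).ofAT_mul ((X 0 ^ 2 + X 1 ^ 5) * X 0 ^ 2)).of_sub_mem ?_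
    convert I_T.mul_mem_left (-(X 1 ^ k * X 2 ^ i * X 3 ^ j)) m₁_mem using 1
    simp only [m₁, map_mul, map_add, map_pow, ofAT_X_zero, ofAT_X_one]
    ring
  | k, i + 1, j + 1 => by
    refine (((hasNormalForm_X_pow_mul (k + 2) i j).sub
      (hasNormalForm_X_pow_mul k i (j + 1))).ofAT_mul (X 0 ^ 2 + X 1 ^ 5)).of_sub_mem ?_
    convert I_T.mul_mem_left (-(X 1 ^ k * X 2 ^ i * X 3 ^ j)) m₂_mem using 1
    simp only [m₂, map_add, map_pow, ofAT_X_zero, ofAT_X_one]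
    ring
  | k + 1, 0, j + 1 => by
    refine ((hasNormalForm_X_pow_mul (k + 3) 0 j).sub
      ((hasNormalForm_X_pow_mul k 0 (j + 1)).ofAT_mul (X 0 ^ 2))).of_sub_mem ?_
    convert I_T.mul_mem_left (-(X 1 ^ k * X 3 ^ j)) m₃_mem using 1
    simp only [m₃, map_pow, ofAT_X_zero]
    ring
termination_by k i j => (i + j, k)

theorem hasNormalForm (p : P₅) : HasNormalForm p := by
  induction p using MvPolynomial.induction_on' with
  | monomial u c =>
    convert (hasNormalForm_X_pow_mul (u 1) (u 2) (u 3)).ofAT_mul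
      (C c * X 0 ^ u 0 * X 1 ^ u 4) using 1
    rw [monomial_eq, Finsupp.prod_pow, Fin.prod_univ_five]
    simp only [ofAT, ofABT, atToABT, AlgHom.coe_comp, Function.comp_apply, map_mul, map_pow,
      algHom_C, algebraMap_eq, rename_X, Matrix.cons_val_zero, Matrix.cons_val_one, Matrix.cons_val]
    ring
  | add p q hp hq => exact hp.add hq

abbrev K := FractionRing P₃

local notation "g" => algebraMap P₃ K

def parametrization : P₅ →ₐ[ℂ] K :=
  aeval ![g (X 0), g (X 1), g ((X 0 ^ 2 + X 2 ^ 5) * X 0 ^ 2) / g (X 1),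
    g (X 1 ^ 3) / g (X 0 ^ 2 + X 1), g (X 2)]

theorem algebraMap_X_one_ne_zero : g (X 1) ≠ 0 :=
  (map_ne_zero_iff _ (IsFractionRing.injective P₃ K)).2 (X_ne_zero 1)

theorem algebraMap_X_zero_sq_add_X_one_ne_zero : g (X 0 ^ 2 + X 1) ≠ 0 := by
  refine (map_ne_zero_iff _ (IsFractionRing.injective P₃ K)).2 fun h => ?_
  simpa using congrArg (eval ![0, 1, 0]) h

theorem I_T_le_ker_parametrization : I_T ≤ RingHom.ker parametrization := by
  have hb := algebraMap_X_one_ne_zero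
  have hh := algebraMap_X_zero_sq_add_X_one_ne_zero
  simp only [map_add, map_pow] at hh
  rw [I_T, Ideal.span_le]
  rintro m (rfl | rfl | rfl) <;>
    simp only [SetLike.mem_coe, RingHom.mem_ker, parametrization, m₁, m₂, m₃, map_sub, map_mul, map_add, map_pow,
      aeval_X, Matrix.cons_val_zero, Matrix.cons_val_one, Matrix.cons_val] <;>
    field_simp <;> ring

theorem parametrization_ofABT (p : P₃) : parametrization (ofABT p) = g p := by
  have : parametrization.comp ofABT = IsScalarTower.toAlgHom ℂ P₃ K := by
    apply algHom_ext; intro i; fin_cases i <;> simp [parametrization, ofABT]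
  exact AlgHom.congr_fun this p

theorem parametrization_normalForm (p₀ : P₃) (r s : Polynomial P₂) :
    parametrization (normalForm p₀ r s) = g p₀
      + (Polynomial.X * r.map atToABT).eval₂ g (g ((X 0 ^ 2 + X 2 ^ 5) * X 0 ^ 2) / g (X 1))
      + (Polynomial.X * s.map atToABT).eval₂ g (g (X 1 ^ 3) / g (X 0 ^ 2 + X 1)) := by
  have hcoeff : (parametrization : P₅ →+* K).comp (ofAT : P₂ →+* P₅) = RingHom.comp g (atToABT : P₂ →+* P₃) :=
    RingHom.ext fun u => parametrization_ofABT (atToABT u)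
  have hX (P : Polynomial P₂) (i : Fin 5) :
      parametrization ((Polynomial.X * P).eval₂ ofAT (X i))
        = (Polynomial.X * P.map atToABT).eval₂ g (parametrization (X i)) := by
    rw [← Polynomial.map_X (atToABT : P₂ →+* P₃), ← Polynomial.map_mul, Polynomial.eval₂_map,
      ← hcoeff]
    exact Polynomial.hom_eval₂ _ _ (parametrization : P₅ →+* K) _
  simp only [normalForm, map_add, parametrization_ofABT, hX]
  simp [parametrization]

def specializeB (c : P₂) : P₃ →ₐ[ℂ] P₂ := aeval ![X 0, c, X 1]

theorem specializeB_atToABT (c u : P₂) : specializeB c (atToABT u) = u := by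
  have : (specializeB c).comp atToABT = AlgHom.id ℂ P₂ := by
    apply algHom_ext; intro i; fin_cases i <;> simp [specializeB, atToABT]
  exact AlgHom.congr_fun this u

theorem eq_zero_of_add_eval₂_div_add_eval₂_div (c : P₂) {p q u q' u' : P₃}
    {r : Polynomial P₂} {Q : Polynomial P₃} (hq : specializeB c q = 0) (hgq : g q ≠ 0)
    (hu : specializeB c u ≠ 0) (hq' : specializeB c q' ≠ 0) (hgq' : g q' ≠ 0)
    (h : g p + (Polynomial.X * r.map atToABT).eval₂ g (g u / g q)
      + Q.eval₂ g (g u' / g q') = 0) : r = 0 := by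
  by_contra hr
  have hinj : Function.Injective atToABT :=
    Function.LeftInverse.injective (specializeB_atToABT c)
  have hr' : r.map (atToABT : P₂ →+* P₃) ≠ 0 := (Polynomial.map_ne_zero_iff hinj).2 hr
  have := Polynomial.map_leadingCoeff_eq_zero_of_add_eval₂_div_add_eval₂_div
    (IsFractionRing.injective P₃ K) (π := (specializeB c : P₃ →+* P₂)) hq hgq hu hq' hgq'
    (by rw [Polynomial.X_mul, Polynomial.natDegree_mul_X hr']; omega) h
  rw [Polynomial.X_mul, Polynomial.leadingCoeff_mul_X,
    Polynomial.leadingCoeff_map_of_injective (f := (atToABT : P₂ →+* P₃)) hinj] at this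
  exact hr (Polynomial.leadingCoeff_eq_zero.1 (by simpa [specializeB_atToABT] using this))

theorem normalForm_eq_zero {p₀ : P₃} {r s : Polynomial P₂} (h : parametrization (normalForm p₀ r s) = 0) :
    normalForm p₀ r s = 0 := by
  rw [parametrization_normalForm] at h
  have hne (c : P₂) (v : P₃) (hv : eval ![1, 1] (specializeB c v) ≠ 0) : specializeB c v ≠ 0 :=
    fun h0 => hv (by rw [h0, map_zero])
  have hr : r = 0 :=
    eq_zero_of_add_eval₂_div_add_eval₂_div 0 (by simp [specializeB]) algebraMap_X_one_ne_zero
      (hne _ ((X 0 ^ 2 + X 2 ^ 5) * X 0 ^ 2) (by norm_num [specializeB, Matrix.cons_val_two]))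
      (hne _ (X 0 ^ 2 + X 1) (by norm_num [specializeB])) algebraMap_X_zero_sq_add_X_one_ne_zero h
  have hs : s = 0 :=
    eq_zero_of_add_eval₂_div_add_eval₂_div (-X 0 ^ 2) (by simp [specializeB])
      algebraMap_X_zero_sq_add_X_one_ne_zero (hne _ (X 1 ^ 3) (by norm_num [specializeB]))
      (hne _ (X 1) (by norm_num [specializeB])) algebraMap_X_one_ne_zero (by linear_combination h)
  subst hr hs
  have hp₀ : p₀ = 0 := IsFractionRing.injective P₃ K (by simpa using h)
  simp [normalForm, hp₀]

theorem ker_parametrization : RingHom.ker parametrization = I_T := by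
  refine le_antisymm (fun p hp => ?_) I_T_le_ker_parametrization
  obtain ⟨p₀, r, s, hsub⟩ := hasNormalForm p
  have hnf : parametrization (normalForm p₀ r s) = 0 := by
    have := I_T_le_ker_parametrization hsub
    rw [RingHom.mem_ker] at hp this
    simpa [hp] using this
  simpa [normalForm_eq_zero hnf] using hsub

end

end MinorsQuotient

theorem stmt_9 : IsDomain (MvPolynomial (Fin 5) ℂ ⧸ I_T) := by
  rw [Ideal.Quotient.isDomain_iff_prime, ← MinorsQuotient.ker_parametrization]
  exact RingHom.ker_isPrime _
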